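/- Suppose Q is in rational normal form with parameters z and k_1,…,k_d, and γ is generic. Then every 2-cocycle α on g(γ,Q) is cohomologous to a ℂ-linear combination of the two 2-cocycles α_1 and α_2: there exist c_1,c_2∈ℂ and a linear map f:g→ℂ such that α = c_1α_1 + c_2α_2 + ψ_f, where α_1(L_m,L_n)=δ_{m+n,0}·((m_γ)^3−m_γ)/12 if m∈R and 0 if m∉R (with m_γ=(γ|m)/(γ|k_1e_1)), and α_2(L_r,L_s)=δ_{r+s,0}·σ(r,−r)·(γ|r)/(γ|k_1e_1) if r∈ℤ^d∖R and 0 if r∈R. Consequently the universal central extension of g has a two-dimensional center. -/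

import Mathlib

open scoped BigOperators

namespace QTorus

/-- σ(m,n) = ∏_{i<j} q_{ji}^{m_j n_i}. -/
noncomputable def qsigma (d : ℕ) (Q : Matrix (Fin d) (Fin d) ℂ) (m n : Fin d → ℤ) : ℂ :=
  ∏ i : Fin d, ∏ j : Fin d, if i < j then Q j i ^ (m j * n i) else 1

/-- The radical subgroup R = {m | σ(m,n)=σ(n,m) for all n}. -/
def Rset (d : ℕ) (Q : Matrix (Fin d) (Fin d) ℂ) : Set (Fin d → ℤ) :=
  {m | ∀ n : Fin d → ℤ, qsigma d Q m n = qsigma d Q n m}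

/-- (γ|m) = ∑ γ_i m_i. -/
noncomputable def ip (d : ℕ) (γ : Fin d → ℂ) (m : Fin d → ℤ) : ℂ :=
  ∑ i : Fin d, γ i * (m i : ℂ)

/-- The underlying vector space of g(γ,Q): formal ℂ-linear combinations of basis
vectors indexed by ℤ^d. -/
abbrev g (d : ℕ) := (Fin d → ℤ) →₀ ℂ

/-- The basis vector L_m. -/
noncomputable def L (d : ℕ) (m : Fin d → ℤ) : g d := Finsupp.single m 1

/-- Hypotheses on the matrix Q: nonzero entries, q_{ii}=1, q_{ij}q_{ji}=1. -/
def QOk (d : ℕ) (Q : Matrix (Fin d) (Fin d) ℂ) : Prop :=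
  (∀ i, Q i i = 1) ∧ (∀ i j, Q i j * Q j i = 1) ∧ (∀ i j, Q i j ≠ 0)

/-- γ is generic: γ_1,…,γ_d are linearly independent over ℚ. -/
def Generic (d : ℕ) (γ : Fin d → ℂ) : Prop := LinearIndependent ℚ γ

open Classical in
/-- Structure constants of g(γ,Q): [L_m, L_n] = sc(m,n) • L_{m+n}. -/
noncomputable def sc (d : ℕ) (Q : Matrix (Fin d) (Fin d) ℂ) (γ : Fin d → ℂ)
    (m n : Fin d → ℤ) : ℂ :=
  if m ∈ Rset d Q then
    (if n ∈ Rset d Q then qsigma d Q m n * ip d γ (n - m)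
     else qsigma d Q m n * ip d γ n)
  else
    (if n ∈ Rset d Q then -(qsigma d Q n m * ip d γ m)
     else qsigma d Q m n - qsigma d Q n m)

/-- The bracket of g(γ,Q), as the bilinear extension of
[L_m, L_n] = sc(m,n) • L_{m+n}. -/
noncomputable def br (d : ℕ) (Q : Matrix (Fin d) (Fin d) ℂ) (γ : Fin d → ℂ)
    (x y : g d) : g d :=
  x.sum fun m a => y.sum fun n b => Finsupp.single (m + n) (a * b * sc d Q γ m n)

/-- A Lie algebra automorphism of g(γ,Q): a linear equivalence preserving the bracket. -/
def IsAut (d : ℕ) (Q : Matrix (Fin d) (Fin d) ℂ) (γ : Fin d → ℂ)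
    (θ : g d ≃ₗ[ℂ] g d) : Prop :=
  ∀ x y : g d, θ (br d Q γ x y) = br d Q γ (θ x) (θ y)

/-- A derivation of g(γ,Q). -/
def IsDer (d : ℕ) (Q : Matrix (Fin d) (Fin d) ℂ) (γ : Fin d → ℂ)
    (D : g d →ₗ[ℂ] g d) : Prop :=
  ∀ x y : g d, D (br d Q γ x y) = br d Q γ (D x) y + br d Q γ x (D y)

open Classical in
/-- δ(n,R) = 1 if n ∈ R, 0 otherwise. -/
noncomputable def deltaR (d : ℕ) (Q : Matrix (Fin d) (Fin d) ℂ) (n : Fin d → ℤ) : ℕ :=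
  if n ∈ Rset d Q then 1 else 0

/-- A 2-cocycle on g(γ,Q). -/
def IsCocycle (d : ℕ) (Q : Matrix (Fin d) (Fin d) ℂ) (γ : Fin d → ℂ)
    (α : g d →ₗ[ℂ] g d →ₗ[ℂ] ℂ) : Prop :=
  (∀ x y : g d, α x y = - α y x) ∧
  (∀ x y z : g d,
    α (br d Q γ x y) z + α (br d Q γ z x) y + α (br d Q γ y z) x = 0)

/-- i ↔ j is one of the exceptional index pairs (2l-1,2l) (1-based) of the rational
normal form. Here indices are 0-based. -/
def OffDiagPair (z : ℕ) (i j : ℕ) : Prop :=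
  ∃ l : ℕ, l < z ∧ ((i = 2 * l ∧ j = 2 * l + 1) ∨ (i = 2 * l + 1 ∧ j = 2 * l))

/-- Q is in rational normal form with parameters z and k_1,…,k_d (0-based indexing:
the paper's pair (2i-1,2i) is the Lean pair (2l, 2l+1) with l = i-1). -/
def IsRNF (d : ℕ) (Q : Matrix (Fin d) (Fin d) ℂ) (z : ℕ) (k : Fin d → ℕ) : Prop :=
  0 < z ∧ 2 * z ≤ d ∧
  (∀ i j : Fin d, ¬ OffDiagPair z i.val j.val → Q i j = 1) ∧
  (∀ (l : ℕ) (_ : l < z) (hi : 2 * l < d) (hj : 2 * l + 1 < d),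
      IsPrimitiveRoot (Q ⟨2 * l, hi⟩ ⟨2 * l + 1, hj⟩) (k ⟨2 * l, hi⟩) ∧
      Q ⟨2 * l + 1, hj⟩ ⟨2 * l, hi⟩ = (Q ⟨2 * l, hi⟩ ⟨2 * l + 1, hj⟩)⁻¹ ∧
      k ⟨2 * l + 1, hj⟩ = k ⟨2 * l, hi⟩ ∧
      1 < k ⟨2 * l, hi⟩) ∧
  (∀ (i : ℕ) (_ : i + 1 < 2 * z) (h1 : i < d) (h2 : i + 1 < d),
      k ⟨i + 1, h2⟩ ∣ k ⟨i, h1⟩) ∧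
  (∀ i : Fin d, 2 * z ≤ i.val → k i = 1)

/-- The vector k_1 e_1 ∈ ℤ^d. -/
noncomputable def k1e1 (d : ℕ) (k : Fin d → ℕ) (hd : 0 < d) : Fin d → ℤ :=
  Pi.single ⟨0, hd⟩ (k ⟨0, hd⟩ : ℤ)

/-- A 2-cocycle is normalized if α(L_{m-k₁e₁}, L_{k₁e₁})=0 for m ∈ R, m ≠ 2k₁e₁,
α(L_0, L_{2k₁e₁})=0, α(L_0, L_s)=0 for s ∉ R, and α(L_m,L_n)=0 whenever m+n ≠ 0. -/
def IsNormalized (d : ℕ) (Q : Matrix (Fin d) (Fin d) ℂ) (k : Fin d → ℕ) (hd : 0 < d)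
    (α : g d →ₗ[ℂ] g d →ₗ[ℂ] ℂ) : Prop :=
  (∀ m ∈ Rset d Q, m ≠ 2 • k1e1 d k hd →
      α (L d (m - k1e1 d k hd)) (L d (k1e1 d k hd)) = 0) ∧
  α (L d 0) (L d (2 • k1e1 d k hd)) = 0 ∧
  (∀ s, s ∉ Rset d Q → α (L d 0) (L d s) = 0) ∧
  (∀ m n : Fin d → ℤ, m + n ≠ 0 → α (L d m) (L d n) = 0)

/-- The degree derivation ∂_i, acting by ∂_i(L_m) = m_i L_m. -/
noncomputable def deg (d : ℕ) (i : Fin d) (y : g d) : g d :=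
  y.sum fun m a => Finsupp.single m ((m i : ℂ) * a)

open Classical in
/-- The 2-cocycle α₁: α₁(L_m,L_n) = δ_{m+n,0}((m_γ)³-m_γ)/12 for m ∈ R, 0 otherwise,
where m_γ = (γ|m)/(γ|k₁e₁). -/
noncomputable def alpha1 (d : ℕ) (Q : Matrix (Fin d) (Fin d) ℂ) (γ : Fin d → ℂ)
    (k : Fin d → ℕ) (hd : 0 < d) (x y : g d) : ℂ :=
  x.sum fun m a => y.sum fun n b => a * b *
    (if m ∈ Rset d Q ∧ m + n = 0 then
       ((ip d γ m / ip d γ (k1e1 d k hd)) ^ 3 - ip d γ m / ip d γ (k1e1 d k hd)) / 12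
     else 0)

open Classical in
/-- The 2-cocycle α₂: α₂(L_r,L_s) = δ_{r+s,0} σ(r,-r)(γ|r)/(γ|k₁e₁) for r ∉ R,
0 otherwise. -/
noncomputable def alpha2 (d : ℕ) (Q : Matrix (Fin d) (Fin d) ℂ) (γ : Fin d → ℂ)
    (k : Fin d → ℕ) (hd : 0 < d) (x y : g d) : ℂ :=
  x.sum fun m a => y.sum fun n b => a * b *
    (if m ∉ Rset d Q ∧ m + n = 0 then
       qsigma d Q m (-m) * (ip d γ m / ip d γ (k1e1 d k hd))
     else 0)

end QTorus

open QTorus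

/-!
Write `φ(m) = α(L_m, L_{-m})`. Since `L_0` acts diagonally with eigenvalues `(γ|m)`, the cocycle
identity with `L_0` turns every `α(L_m, L_n)` with `m + n ≠ 0` into a coboundary, so only `φ`
matters. In rational normal form `σ` is trivial on the radical `R`, and there `φ` solves the
Virasoro cocycle equation; a solution vanishing at `e = k₁e₁` and `2e` vanishes on all of `R`
(three instances of the equation give `12 (γ|e)³ φ(m) = 0`), so `φ` is a combination of `x³` and
`x` with `x = (γ|m)/(γ|e)`, the `x` part being a coboundary. Off `R`, `σ(r,r) φ(r)` is additive
over non-commuting pairs and scales like `(γ|r)` under translation by `e`, hence is proportional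
to `(γ|r)` along non-commuting pairs; since a group is never the union of two proper subgroups,
any two `r, s ∉ R` have a common non-commuting partner, so the ratio is a global constant.
Evaluating a coboundary at `(e, -e)`, `(2e, -2e)` and `(r, -r)` with `r ∉ R` separates `α₁`, `α₂`.
-/

lemma AddSubgroup.exists_notMem_notMem {G : Type*} [AddGroup G] {H K : AddSubgroup G}
    (hH : ∃ a, a ∉ H) (hK : ∃ b, b ∉ K) : ∃ u, u ∉ H ∧ u ∉ K := by
  obtain ⟨a, ha⟩ := hH
  obtain ⟨b, hb⟩ := hK
  by_cases haK : a ∈ K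
  · by_cases hbH : b ∈ H
    · exact ⟨a + b, (H.add_mem_cancel_right hbH).not.mpr ha,
        (K.add_mem_cancel_left haK).not.mpr hb⟩
    · exact ⟨b, hbH, hb⟩
  · exact ⟨a, ha, haK⟩

namespace QTorus

section Virasoro

variable {G : Type*} [AddCommGroup G]

def IsVirasoroSolution (ℓ : G →+ ℂ) (S : AddSubgroup G) (φ : G → ℂ) : Prop :=
  ∀ m ∈ S, ∀ n ∈ S, ℓ (n - m) * φ (m + n) - ℓ (m + m + n) * φ n + ℓ (m + n + n) * φ m = 0

variable {ℓ : G →+ ℂ} {S : AddSubgroup G} {φ : G → ℂ} (hφ : IsVirasoroSolution ℓ S φ)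
  {e : G} (he : e ∈ S) (hℓe : ℓ e ≠ 0) (hodd : ∀ m, φ (-m) = -φ m)
include hφ he hℓe hodd

lemma IsVirasoroSolution.eq_zero (h₁ : φ e = 0) (h₂ : φ (e + e) = 0) : ∀ m ∈ S, φ m = 0 := by
  intro m hm
  have hme : m - e ∈ S := S.sub_mem hm he
  have hmee : m - e - e ∈ S := S.sub_mem hme he
  have e₁ := hφ _ hmee e he
  have e₂ := hφ _ hme e he
  have e₃ := hφ m hm _ (S.neg_mem hmee)
  rw [show m - e - e + e = m - e by abel, h₁] at e₁
  rw [show m - e + e = m by abel, h₁] at e₂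
  rw [show m + -(m - e - e) = e + e by abel, h₂, hodd] at e₃
  simp only [map_add, map_sub, map_neg] at e₁ e₂ e₃
  have h : 12 * ℓ e ^ 3 * φ m = 0 := by
    linear_combination (-(ℓ m + ℓ e) * (ℓ m + 2 * ℓ e)) * e₁
      + ((3 * ℓ e - ℓ m) * (ℓ m + 2 * ℓ e)) * e₂ + (ℓ m * (ℓ m + ℓ e)) * e₃
  simpa [hℓe] using h

lemma IsVirasoroSolution.eq_cubic :
    ∃ A B : ℂ, ∀ m ∈ S, φ m = A * (ℓ m / ℓ e) ^ 3 + B * (ℓ m / ℓ e) := by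
  set A := (φ (e + e) - 2 * φ e) / 6
  set B := φ e - A
  let ψ m := φ m - (A * (ℓ m / ℓ e) ^ 3 + B * (ℓ m / ℓ e))
  have hψ : IsVirasoroSolution ℓ S ψ := fun m hm n hn => by
    have := hφ m hm n hn
    simp only [ψ, map_add, map_sub] at this ⊢
    field_simp
    linear_combination ℓ e ^ 3 * this
  have hψodd : ∀ m, ψ (-m) = -ψ m := fun m => by
    simp only [ψ, hodd, map_neg]
    ring
  refine ⟨A, B, fun m hm => sub_eq_zero.mp (hψ.eq_zero he hℓe hψodd ?_ ?_ m hm)⟩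
  · simp only [ψ, A, B]
    field_simp
    ring
  · simp only [ψ, A, B, map_add]
    field_simp
    ring

end Virasoro

variable {d : ℕ}

section InnerProduct

variable (γ : Fin d → ℂ)

noncomputable def ipHom : (Fin d → ℤ) →+ ℂ where
  toFun := ip d γ
  map_zero' := by simp [ip]
  map_add' m n := by simp [ip, mul_add, Finset.sum_add_distrib]

@[simp]
lemma ipHom_apply (m : Fin d → ℤ) : ipHom γ m = ip d γ m := rfl

lemma ip_add (m n : Fin d → ℤ) : ip d γ (m + n) = ip d γ m + ip d γ n :=
  map_add (ipHom γ) m n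

lemma ip_neg (m : Fin d → ℤ) : ip d γ (-m) = -ip d γ m := map_neg (ipHom γ) m

lemma ip_sub (m n : Fin d → ℤ) : ip d γ (m - n) = ip d γ m - ip d γ n :=
  map_sub (ipHom γ) m n

variable {γ}

lemma ip_ne_zero (hγ : Generic d γ) {m : Fin d → ℤ} (hm : m ≠ 0) : ip d γ m ≠ 0 := by
  contrapose! hm
  have hsum : ∑ i, (m i : ℚ) • γ i = 0 := by
    rw [← hm, ip]
    exact Finset.sum_congr rfl fun i _ => by rw [Rat.smul_def]; push_cast; ring
  funext i
  exact_mod_cast Fintype.linearIndependent_iff.mp hγ _ hsum i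

end InnerProduct

section Sigma

variable {Q : Matrix (Fin d) (Fin d) ℂ}

@[simp]
lemma qsigma_zero_left (n : Fin d → ℤ) : qsigma d Q 0 n = 1 := by simp [qsigma]

@[simp]
lemma qsigma_zero_right (m : Fin d → ℤ) : qsigma d Q m 0 = 1 := by simp [qsigma]

lemma zero_mem_Rset : (0 : Fin d → ℤ) ∈ Rset d Q := fun n => by simp

lemma ip_ne_zero_of_notMem {γ : Fin d → ℂ} (hγ : Generic d γ) {r : Fin d → ℤ}
    (hr : r ∉ Rset d Q) : ip d γ r ≠ 0 :=
  ip_ne_zero hγ fun h => hr (h ▸ zero_mem_Rset)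

variable (hQ0 : ∀ i j, Q i j ≠ 0)
include hQ0

lemma qsigma_add_left (m m' n : Fin d → ℤ) :
    qsigma d Q (m + m') n = qsigma d Q m n * qsigma d Q m' n := by
  simp only [qsigma, ← Finset.prod_mul_distrib]
  refine Finset.prod_congr rfl fun i _ => Finset.prod_congr rfl fun j _ => ?_
  split_ifs
  · rw [Pi.add_apply, add_mul, zpow_add₀ (hQ0 j i)]
  · rw [mul_one]

lemma qsigma_add_right (m n n' : Fin d → ℤ) :
    qsigma d Q m (n + n') = qsigma d Q m n * qsigma d Q m n' := by
  simp only [qsigma, ← Finset.prod_mul_distrib]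
  refine Finset.prod_congr rfl fun i _ => Finset.prod_congr rfl fun j _ => ?_
  split_ifs
  · rw [Pi.add_apply, mul_add, zpow_add₀ (hQ0 j i)]
  · rw [mul_one]

lemma qsigma_ne_zero (m n : Fin d → ℤ) : qsigma d Q m n ≠ 0 :=
  Finset.prod_ne_zero_iff.mpr fun i _ => Finset.prod_ne_zero_iff.mpr fun j _ => by
    split_ifs
    · exact zpow_ne_zero _ (hQ0 j i)
    · exact one_ne_zero

lemma qsigma_neg_left (m n : Fin d → ℤ) : qsigma d Q (-m) n = (qsigma d Q m n)⁻¹ :=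
  eq_inv_of_mul_eq_one_left (by rw [← qsigma_add_left hQ0, neg_add_cancel, qsigma_zero_left])

lemma qsigma_neg_right (m n : Fin d → ℤ) : qsigma d Q m (-n) = (qsigma d Q m n)⁻¹ :=
  eq_inv_of_mul_eq_one_left (by rw [← qsigma_add_right hQ0, neg_add_cancel, qsigma_zero_right])

def commutant (r : Fin d → ℤ) : AddSubgroup (Fin d → ℤ) where
  carrier := {u | qsigma d Q r u = qsigma d Q u r}
  zero_mem' := by simp
  add_mem' {u v} hu hv := by
    simp only [Set.mem_ofPred_eq] at *
    rw [qsigma_add_left hQ0, qsigma_add_right hQ0, hu, hv]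
  neg_mem' {u} hu := by
    simp only [Set.mem_ofPred_eq] at *
    rw [qsigma_neg_left hQ0, qsigma_neg_right hQ0, hu]

def radical : AddSubgroup (Fin d → ℤ) where
  carrier := Rset d Q
  zero_mem' := zero_mem_Rset
  add_mem' {m m'} hm hm' n := by
    rw [qsigma_add_left hQ0, qsigma_add_right hQ0, hm, hm']
  neg_mem' {m} hm n := by
    rw [qsigma_neg_left hQ0, qsigma_neg_right hQ0, hm]

lemma notMem_Rset_iff {r : Fin d → ℤ} : r ∉ Rset d Q ↔ ∃ u, u ∉ commutant hQ0 r := by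
  simp [Rset, commutant]

lemma add_notMem_Rset {r s : Fin d → ℤ} (hrs : qsigma d Q r s ≠ qsigma d Q s r) :
    r + s ∉ Rset d Q := fun h =>
  hrs (mul_right_cancel₀ (qsigma_ne_zero hQ0 s s) (by
    rw [← qsigma_add_left hQ0, ← qsigma_add_right hQ0, h s]))

end Sigma

section RationalNormalForm

variable {z : ℕ}

def evenIdx (h : 2 * z ≤ d) (l : Fin z) : Fin d := ⟨2 * l, by omega⟩

def oddIdx (h : 2 * z ≤ d) (l : Fin z) : Fin d := ⟨2 * l + 1, by omega⟩

lemma evenIdx_injective (h : 2 * z ≤ d) : Function.Injective (evenIdx h) :=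
  fun l l' hl => Fin.ext (by simpa [evenIdx] using hl)

lemma oddIdx_injective (h : 2 * z ≤ d) : Function.Injective (oddIdx h) :=
  fun l l' hl => Fin.ext (by simpa [oddIdx] using hl)

lemma evenIdx_ne_oddIdx (h : 2 * z ≤ d) (l l' : Fin z) : evenIdx h l ≠ oddIdx h l' := by
  simp only [evenIdx, oddIdx, ne_eq, Fin.mk.injEq]
  omega

namespace IsRNF

variable {Q : Matrix (Fin d) (Fin d) ℂ} {k : Fin d → ℕ} (hRNF : IsRNF d Q z k)
include hRNF

def qPair (l : Fin z) : ℂ := Q (oddIdx hRNF.2.1 l) (evenIdx hRNF.2.1 l)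

lemma exists_of_lt_of_ne_one {i j : Fin d} (hij : i < j) (hQ : Q j i ≠ 1) :
    ∃ l, i = evenIdx hRNF.2.1 l ∧ j = oddIdx hRNF.2.1 l := by
  by_contra hne
  refine hQ (hRNF.2.2.1 j i ?_)
  rintro ⟨l, hl, ⟨hj, hi⟩ | ⟨hj, hi⟩⟩
  · exact absurd hij (by rw [Fin.lt_def]; omega)
  · exact hne ⟨⟨l, hl⟩, Fin.ext hi, Fin.ext hj⟩

lemma qsigma_eq_prod (m n : Fin d → ℤ) :
    qsigma d Q m n = ∏ l, hRNF.qPair l ^ (m (oddIdx hRNF.2.1 l) * n (evenIdx hRNF.2.1 l)) := by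
  symm
  refine Fintype.prod_of_injective _ (evenIdx_injective hRNF.2.1) _ _ ?_ fun l => ?_
  · rintro i hi
    refine Finset.prod_eq_one fun j _ => ?_
    split_ifs with hij
    · obtain hQ | hQ := eq_or_ne (Q j i) 1
      · rw [hQ, one_zpow]
      · obtain ⟨l, rfl, -⟩ := hRNF.exists_of_lt_of_ne_one hij hQ
        exact absurd ⟨l, rfl⟩ hi
    · rfl
  · rw [qPair, Finset.prod_eq_single (oddIdx hRNF.2.1 l)]
    · rw [if_pos (by simp [Fin.lt_def, evenIdx, oddIdx])]
    · intro j _ hj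
      split_ifs with hij
      · obtain hQ | hQ := eq_or_ne (Q j (evenIdx hRNF.2.1 l)) 1
        · rw [hQ, one_zpow]
        · obtain ⟨l', hl', rfl⟩ := hRNF.exists_of_lt_of_ne_one hij hQ
          exact absurd (by rw [evenIdx_injective _ hl']) hj
      · rfl
    · simp

lemma qPair_pow_k (l : Fin z) : hRNF.qPair l ^ k (evenIdx hRNF.2.1 l) = 1 := by
  obtain ⟨hprim, hinv, -, -⟩ :=
    hRNF.2.2.2.1 l l.2 (evenIdx hRNF.2.1 l).2 (oddIdx hRNF.2.1 l).2
  rw [qPair, oddIdx, evenIdx, hinv, inv_pow, hprim.pow_eq_one, inv_one]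

lemma qPair_ne_one (l : Fin z) : hRNF.qPair l ≠ 1 := by
  obtain ⟨hprim, hinv, -, hk⟩ :=
    hRNF.2.2.2.1 l l.2 (evenIdx hRNF.2.1 l).2 (oddIdx hRNF.2.1 l).2
  rw [qPair, oddIdx, evenIdx, hinv, inv_ne_one]
  exact hprim.ne_one hk

lemma qsigma_eq_one_left {m : Fin d → ℤ}
    (hm : ∀ l, hRNF.qPair l ^ m (oddIdx hRNF.2.1 l) = 1) (n : Fin d → ℤ) :
    qsigma d Q m n = 1 := by
  rw [hRNF.qsigma_eq_prod]
  exact Finset.prod_eq_one fun l _ => by rw [zpow_mul, hm, one_zpow]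

lemma qsigma_eq_one_right {m : Fin d → ℤ}
    (hm : ∀ l, hRNF.qPair l ^ m (evenIdx hRNF.2.1 l) = 1) (n : Fin d → ℤ) :
    qsigma d Q n m = 1 := by
  rw [hRNF.qsigma_eq_prod]
  exact Finset.prod_eq_one fun l _ => by rw [mul_comm (n _), zpow_mul, hm, one_zpow]

lemma qsigma_single_evenIdx (m : Fin d → ℤ) (l : Fin z) :
    qsigma d Q m (Pi.single (evenIdx hRNF.2.1 l) 1) = hRNF.qPair l ^ m (oddIdx hRNF.2.1 l) := by
  rw [hRNF.qsigma_eq_prod, Finset.prod_eq_single l (fun l' _ hl' => ?_) (by simp)]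
  · rw [Pi.single_eq_same, mul_one]
  · rw [Pi.single_eq_of_ne ((evenIdx_injective _).ne hl'), mul_zero, zpow_zero]

lemma single_oddIdx_qsigma (m : Fin d → ℤ) (l : Fin z) :
    qsigma d Q (Pi.single (oddIdx hRNF.2.1 l) 1) m = hRNF.qPair l ^ m (evenIdx hRNF.2.1 l) := by
  rw [hRNF.qsigma_eq_prod, Finset.prod_eq_single l (fun l' _ hl' => ?_) (by simp)]
  · rw [Pi.single_eq_same, one_mul]
  · rw [Pi.single_eq_of_ne ((oddIdx_injective _).ne hl'), zero_mul, zpow_zero]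

lemma mem_Rset_iff {m : Fin d → ℤ} : m ∈ Rset d Q ↔
    ∀ l, hRNF.qPair l ^ m (evenIdx hRNF.2.1 l) = 1 ∧ hRNF.qPair l ^ m (oddIdx hRNF.2.1 l) = 1 := by
  refine ⟨fun hm l => ⟨?_, ?_⟩, fun hm n => ?_⟩
  · rw [← hRNF.single_oddIdx_qsigma, ← hm, hRNF.qsigma_eq_one_right]
    intro l'
    rw [Pi.single_eq_of_ne (evenIdx_ne_oddIdx _ _ _), zpow_zero]
  · rw [← hRNF.qsigma_single_evenIdx, hm, hRNF.qsigma_eq_one_left]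
    intro l'
    rw [Pi.single_eq_of_ne (evenIdx_ne_oddIdx _ _ _).symm, zpow_zero]
  · rw [hRNF.qsigma_eq_one_left (fun l => (hm l).2), hRNF.qsigma_eq_one_right (fun l => (hm l).1)]

lemma qsigma_eq_one_of_mem (m : Fin d → ℤ) (hm : m ∈ Rset d Q) (n : Fin d → ℤ) :
    qsigma d Q m n = 1 :=
  hRNF.qsigma_eq_one_left (fun l => ((hRNF.mem_Rset_iff.mp hm) l).2) n

lemma exists_notMem_Rset : ∃ r, r ∉ Rset d Q := by
  let l : Fin z := ⟨0, hRNF.1⟩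
  refine ⟨Pi.single (oddIdx hRNF.2.1 l) 1, fun h => hRNF.qPair_ne_one l ?_⟩
  simpa using ((hRNF.mem_Rset_iff.mp h) l).2

variable (hd : 0 < d)

lemma k1e1_mem_Rset : k1e1 d k hd ∈ Rset d Q := by
  refine hRNF.mem_Rset_iff.mpr fun l => ⟨?_, ?_⟩
  · rw [k1e1, Pi.single_apply]
    split_ifs with hl
    · rw [← hl, zpow_natCast, hRNF.qPair_pow_k]
    · rw [zpow_zero]
  · rw [k1e1, Pi.single_eq_of_ne (by simp [oddIdx, Fin.ext_iff]), zpow_zero]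

lemma k1e1_ne_zero : k1e1 d k hd ≠ 0 := by
  have hk : 1 < k ⟨0, hd⟩ :=
    (hRNF.2.2.2.1 0 hRNF.1 hd (oddIdx hRNF.2.1 ⟨0, hRNF.1⟩).2).2.2.2
  rw [k1e1, Ne, Pi.single_eq_zero_iff]
  omega

end IsRNF

end RationalNormalForm

section StructureConstants

variable {Q : Matrix (Fin d) (Fin d) ℂ} (γ : Fin d → ℂ)

lemma sc_of_notMem_of_notMem {m n : Fin d → ℤ} (hm : m ∉ Rset d Q) (hn : n ∉ Rset d Q) :
    sc d Q γ m n = qsigma d Q m n - qsigma d Q n m := by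
  rw [sc, if_neg hm, if_neg hn]

lemma sc_zero_left (n : Fin d → ℤ) : sc d Q γ 0 n = ip d γ n := by
  by_cases hn : n ∈ Rset d Q <;> simp [sc, zero_mem_Rset, hn]

lemma sc_zero_right (m : Fin d → ℤ) : sc d Q γ m 0 = -ip d γ m := by
  by_cases hm : m ∈ Rset d Q <;> simp [sc, zero_mem_Rset, hm, ip_neg]

variable (hσ : ∀ m ∈ Rset d Q, ∀ n, qsigma d Q m n = 1)
include hσ

lemma sc_of_mem_of_mem {m n : Fin d → ℤ} (hm : m ∈ Rset d Q) (hn : n ∈ Rset d Q) :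
    sc d Q γ m n = ip d γ n - ip d γ m := by
  rw [sc, if_pos hm, if_pos hn, hσ m hm, one_mul, ip_sub]

lemma sc_of_mem_of_notMem {m n : Fin d → ℤ} (hm : m ∈ Rset d Q) (hn : n ∉ Rset d Q) :
    sc d Q γ m n = ip d γ n := by
  rw [sc, if_pos hm, if_neg hn, hσ m hm, one_mul]

lemma sc_of_notMem_of_mem {m n : Fin d → ℤ} (hm : m ∉ Rset d Q) (hn : n ∈ Rset d Q) :
    sc d Q γ m n = -ip d γ m := by
  rw [sc, if_neg hm, if_pos hn, hσ n hn, one_mul]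

end StructureConstants

section Bilinear

variable {M : Type*} [AddCommMonoid M] [Module ℂ M]

noncomputable def lift₂ (v : (Fin d → ℤ) → (Fin d → ℤ) → M) : g d →ₗ[ℂ] g d →ₗ[ℂ] M :=
  Finsupp.linearCombination ℂ fun m => Finsupp.linearCombination ℂ (v m)

@[simp]
lemma lift₂_L_L (v : (Fin d → ℤ) → (Fin d → ℤ) → M) (m n : Fin d → ℤ) :
    lift₂ v (L d m) (L d n) = v m n := by
  simp [lift₂, L]

lemma sum_sum_smul_eq_lift₂ (v : (Fin d → ℤ) → (Fin d → ℤ) → M) (x y : g d) :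
    (x.sum fun m a => y.sum fun n b => (a * b) • v m n) = lift₂ v x y := by
  simp [lift₂, Finsupp.linearCombination_apply, Finsupp.smul_sum, mul_smul]

lemma bilin_ext {B B' : g d →ₗ[ℂ] g d →ₗ[ℂ] M}
    (h : ∀ m n, B (L d m) (L d n) = B' (L d m) (L d n)) : B = B' := by
  ext m n
  exact h m n

variable {Q : Matrix (Fin d) (Fin d) ℂ} {γ : Fin d → ℂ}

lemma br_eq_lift₂ (x y : g d) :
    br d Q γ x y = lift₂ (fun m n => sc d Q γ m n • L d (m + n)) x y := by
  rw [← sum_sum_smul_eq_lift₂]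
  simp [br, L, Finsupp.smul_single]

@[simp]
lemma br_L_L (m n : Fin d → ℤ) : br d Q γ (L d m) (L d n) = sc d Q γ m n • L d (m + n) := by
  simp [br_eq_lift₂]

variable (k : Fin d → ℕ) (hd : 0 < d)

open Classical in
lemma alpha1_L_L (m n : Fin d → ℤ) :
    alpha1 d Q γ k hd (L d m) (L d n) = if m ∈ Rset d Q ∧ m + n = 0 then
       ((ip d γ m / ip d γ (k1e1 d k hd)) ^ 3 - ip d γ m / ip d γ (k1e1 d k hd)) / 12
     else 0 := by
  simp [alpha1, L]

open Classical in
lemma alpha2_L_L (m n : Fin d → ℤ) :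
    alpha2 d Q γ k hd (L d m) (L d n) = if m ∉ Rset d Q ∧ m + n = 0 then
       qsigma d Q m (-m) * (ip d γ m / ip d γ (k1e1 d k hd))
     else 0 := by
  simp [alpha2, L]

lemma alpha1_eq_lift₂ (x y : g d) :
    alpha1 d Q γ k hd x y = lift₂ (fun m n => alpha1 d Q γ k hd (L d m) (L d n)) x y := by
  simp only [alpha1_L_L]
  exact sum_sum_smul_eq_lift₂ _ x y

lemma alpha2_eq_lift₂ (x y : g d) :
    alpha2 d Q γ k hd x y = lift₂ (fun m n => alpha2 d Q γ k hd (L d m) (L d n)) x y := by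
  simp only [alpha2_L_L]
  exact sum_sum_smul_eq_lift₂ _ x y

end Bilinear

section OffRadical

variable {Q : Matrix (Fin d) (Fin d) ℂ} (hQ0 : ∀ i j, Q i j ≠ 0) (γ : Fin d → ℂ)
  (hσ : ∀ m ∈ Rset d Q, ∀ n, qsigma d Q m n = 1)
  {φ : (Fin d → ℤ) → ℂ} (hodd : ∀ m, φ (-m) = -φ m)
  (hjac : ∀ m n, sc d Q γ m n * φ (m + n) + sc d Q γ (-(m + n)) m * φ (-n)
    + sc d Q γ n (-(m + n)) * φ (-m) = 0)
include hQ0 hodd hjac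

include hσ in
lemma ip_mul_add_eq {r n : Fin d → ℤ} (hr : r ∉ Rset d Q) (hn : n ∈ Rset d Q) :
    ip d γ r * φ (r + n) = ip d γ (r + n) * φ r := by
  have hrn : r + n ∉ Rset d Q := ((radical hQ0).add_mem_cancel_right hn).not.mpr hr
  have hrn' : -(r + n) ∉ Rset d Q := ((radical hQ0).neg_mem_iff).not.mpr hrn
  have h := hjac r n
  rw [sc_of_notMem_of_mem γ hσ hr hn, sc_of_notMem_of_notMem γ hrn' hr,
    sc_of_mem_of_notMem γ hσ hn hrn', qsigma_neg_left hQ0, qsigma_neg_right hQ0,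
    qsigma_add_left hQ0, qsigma_add_right hQ0, hσ n hn, ← hn r, hσ n hn, ip_neg, hodd r] at h
  linear_combination -h

lemma qsigma_self_mul_add {r s : Fin d → ℤ} (hrs : qsigma d Q r s ≠ qsigma d Q s r) :
    qsigma d Q (r + s) (r + s) * φ (r + s)
      = qsigma d Q r r * φ r + qsigma d Q s s * φ s := by
  have hr : r ∉ Rset d Q := fun h => hrs (h s)
  have hs : s ∉ Rset d Q := fun h => hrs (h r).symm
  have hrs' : -(r + s) ∉ Rset d Q :=
    ((radical hQ0).neg_mem_iff).not.mpr (add_notMem_Rset hQ0 hrs)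
  have h := hjac r s
  rw [sc_of_notMem_of_notMem γ hr hs, sc_of_notMem_of_notMem γ hrs' hr,
    sc_of_notMem_of_notMem γ hs hrs', hodd, hodd] at h
  simp only [qsigma_neg_left hQ0, qsigma_neg_right hQ0, qsigma_add_left hQ0,
    qsigma_add_right hQ0] at h ⊢
  have := qsigma_ne_zero hQ0 r r
  have := qsigma_ne_zero hQ0 s s
  have := qsigma_ne_zero hQ0 r s
  have := qsigma_ne_zero hQ0 s r
  field_simp at h
  refine mul_left_cancel₀ (sub_ne_zero.mpr hrs) ?_
  linear_combination h

include hσ in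
lemma ip_mul_qsigma_self_mul_eq {e : Fin d → ℤ} (he : e ∈ Rset d Q) (hγe : ip d γ e ≠ 0)
    {r s : Fin d → ℤ} (hrs : qsigma d Q r s ≠ qsigma d Q s r) :
    ip d γ s * (qsigma d Q r r * φ r) = ip d γ r * (qsigma d Q s s * φ s) := by
  have hshift : ∀ x, qsigma d Q (x + e) (x + e) = qsigma d Q x x := fun x => by
    rw [qsigma_add_left hQ0, qsigma_add_right hQ0, qsigma_add_right hQ0, ← he x, hσ e he,
      hσ e he, mul_one, mul_one, mul_one]
  have hres : qsigma d Q (r + e) s ≠ qsigma d Q s (r + e) := by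
    rwa [qsigma_add_left hQ0, qsigma_add_right hQ0, hσ e he, ← he s, hσ e he, mul_one, mul_one]
  have h₁ := qsigma_self_mul_add hQ0 γ hodd hjac hrs
  have h₂ := qsigma_self_mul_add hQ0 γ hodd hjac hres
  have h₃ := ip_mul_add_eq hQ0 γ hσ hodd hjac (fun h => hrs (h s)) he
  have h₄ := ip_mul_add_eq hQ0 γ hσ hodd hjac (add_notMem_Rset hQ0 hrs) he
  rw [add_right_comm, hshift, hshift] at h₂
  simp only [ip_add] at h₃ h₄
  refine mul_left_cancel₀ hγe ?_
  linear_combination (ip d γ r * (ip d γ r + ip d γ s + ip d γ e)) * h₁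
    - (ip d γ r * (ip d γ r + ip d γ s)) * h₂
    - ((ip d γ r + ip d γ s) * qsigma d Q r r) * h₃
    + (ip d γ r * qsigma d Q (r + s) (r + s)) * h₄

include hσ in
lemma exists_eq_mul_ip_of_notMem (hγ : Generic d γ) {e : Fin d → ℤ} (he : e ∈ Rset d Q)
    (he0 : e ≠ 0) : ∃ C : ℂ, ∀ r ∉ Rset d Q, φ r = C * qsigma d Q r (-r) * ip d γ r := by
  have hprop : ∀ r ∉ Rset d Q, ∀ s ∉ Rset d Q,
      ip d γ s * (qsigma d Q r r * φ r) = ip d γ r * (qsigma d Q s s * φ s) := by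
    intro r hr s hs
    obtain ⟨u, hru, hsu⟩ := AddSubgroup.exists_notMem_notMem
      ((notMem_Rset_iff hQ0).mp hr) ((notMem_Rset_iff hQ0).mp hs)
    have h₁ := ip_mul_qsigma_self_mul_eq hQ0 γ hσ hodd hjac he (ip_ne_zero hγ he0) hru
    have h₂ := ip_mul_qsigma_self_mul_eq hQ0 γ hσ hodd hjac he (ip_ne_zero hγ he0) hsu
    refine mul_left_cancel₀ (ip_ne_zero_of_notMem hγ fun h => hru (h r).symm) ?_
    linear_combination ip d γ s * h₁ - ip d γ r * h₂
  obtain ⟨r₀, hr₀⟩ | h := em (∃ r₀, r₀ ∉ Rset d Q)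
  · refine ⟨qsigma d Q r₀ r₀ * φ r₀ / ip d γ r₀, fun r hr => ?_⟩
    have := qsigma_ne_zero hQ0 r r
    have := ip_ne_zero_of_notMem hγ hr₀
    rw [qsigma_neg_right hQ0]
    field_simp
    linear_combination hprop r hr r₀ hr₀
  · exact ⟨0, fun r hr => absurd ⟨r, hr⟩ h⟩

end OffRadical

section Cocycles

variable {Q : Matrix (Fin d) (Fin d) ℂ} {γ : Fin d → ℂ}

noncomputable def antidiag (α : g d →ₗ[ℂ] g d →ₗ[ℂ] ℂ) (m : Fin d → ℤ) : ℂ :=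
  α (L d m) (L d (-m))

namespace IsCocycle

variable {α : g d →ₗ[ℂ] g d →ₗ[ℂ] ℂ} (hα : IsCocycle d Q γ α)
include hα

lemma jacobi_L (m n p : Fin d → ℤ) :
    sc d Q γ m n * α (L d (m + n)) (L d p) + sc d Q γ p m * α (L d (p + m)) (L d n)
      + sc d Q γ n p * α (L d (n + p)) (L d m) = 0 := by
  simpa using hα.2 (L d m) (L d n) (L d p)

lemma ip_add_mul_apply (m n : Fin d → ℤ) :
    ip d γ (m + n) * α (L d m) (L d n) = -(sc d Q γ m n * α (L d (m + n)) (L d 0)) := by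
  have h := hα.jacobi_L 0 m n
  rw [sc_zero_left, sc_zero_right, zero_add, add_zero, hα.1 (L d n)] at h
  rw [ip_add]
  linear_combination h

lemma antidiag_neg (m : Fin d → ℤ) : antidiag α (-m) = -antidiag α m := by
  rw [antidiag, antidiag, neg_neg, hα.1]

lemma jacobi_antidiag (m n : Fin d → ℤ) :
    sc d Q γ m n * antidiag α (m + n) + sc d Q γ (-(m + n)) m * antidiag α (-n)
      + sc d Q γ n (-(m + n)) * antidiag α (-m) = 0 := by
  have h := hα.jacobi_L m n (-(m + n))
  rw [show -(m + n) + m = -n by abel, show n + -(m + n) = -m by abel] at h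
  simpa only [antidiag, neg_neg] using h

lemma isVirasoroSolution_antidiag (hQ0 : ∀ i j, Q i j ≠ 0)
    (hσ : ∀ m ∈ Rset d Q, ∀ n, qsigma d Q m n = 1) :
    IsVirasoroSolution (ipHom γ) (radical hQ0) (antidiag α) := by
  intro m hm n hn
  have h := hα.jacobi_antidiag m n
  have hmn : -(m + n) ∈ Rset d Q := (radical hQ0).neg_mem ((radical hQ0).add_mem hm hn)
  rw [sc_of_mem_of_mem γ hσ hm hn, sc_of_mem_of_mem γ hσ hmn hm, sc_of_mem_of_mem γ hσ hn hmn,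
    hα.antidiag_neg, hα.antidiag_neg] at h
  simp only [ipHom_apply, ip_add, ip_sub, ip_neg] at h ⊢
  linear_combination h

variable {z : ℕ} {k : Fin d → ℕ}

lemma exists_eq_alpha_add_coboundary (hQ0 : ∀ i j, Q i j ≠ 0) (hRNF : IsRNF d Q z k)
    (hd : 0 < d) (hγ : Generic d γ) :
    ∃ (c₁ c₂ : ℂ) (f : g d →ₗ[ℂ] ℂ), ∀ x y : g d,
      α x y = c₁ * alpha1 d Q γ k hd x y + c₂ * alpha2 d Q γ k hd x y + f (br d Q γ x y) := by
  have hσ := hRNF.qsigma_eq_one_of_mem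
  have he := hRNF.k1e1_mem_Rset hd
  have he0 := hRNF.k1e1_ne_zero hd
  have hE := ip_ne_zero hγ he0
  obtain ⟨A, B, hR⟩ := (hα.isVirasoroSolution_antidiag hQ0 hσ).eq_cubic he hE hα.antidiag_neg
  obtain ⟨C, hNR⟩ := exists_eq_mul_ip_of_notMem hQ0 γ hσ hα.antidiag_neg hα.jacobi_antidiag
    hγ he he0
  -- `f(L_p)` cancels `α(L_m, L_n)` for `m + n = p ≠ 0`, and `f(L_0)` the linear part of `α` on `R`.
  let F p := if p = 0 then -(A + B) / (2 * ip d γ (k1e1 d k hd))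
    else -α (L d p) (L d 0) / ip d γ p
  let f : g d →ₗ[ℂ] ℂ := Finsupp.linearCombination ℂ F
  have hf : ∀ p c, f (c • L d p) = c * F p := fun p c => by simp [f, L]
  refine ⟨12 * A, C * ip d γ (k1e1 d k hd), f, fun x y => ?_⟩
  have key : α = (12 * A) • lift₂ (fun m n => alpha1 d Q γ k hd (L d m) (L d n))
      + (C * ip d γ (k1e1 d k hd)) • lift₂ (fun m n => alpha2 d Q γ k hd (L d m) (L d n))
      + (lift₂ fun m n => sc d Q γ m n • L d (m + n)).compr₂ f := by
    refine bilin_ext fun m n => ?_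
    simp only [LinearMap.add_apply, LinearMap.smul_apply, LinearMap.compr₂_apply, lift₂_L_L,
      smul_eq_mul, hf, F, alpha1_L_L, alpha2_L_L]
    by_cases hmn : m + n = 0
    · obtain rfl : n = -m := eq_neg_of_add_eq_zero_right hmn
      by_cases hm : m ∈ Rset d Q
      · simp only [hm, hmn, and_self, if_true, not_true_eq_false, false_and, if_false,
          sc_of_mem_of_mem γ hσ hm ((radical hQ0).neg_mem hm), ip_neg]
        rw [← antidiag, hR m hm, ipHom_apply, ipHom_apply]
        field_simp
        ring
      · have hm' : -m ∉ Rset d Q := ((radical hQ0).neg_mem_iff).not.mpr hm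
        simp only [hm, hmn, false_and, if_false, not_false_eq_true, and_self, if_true,
          sc_of_notMem_of_notMem γ hm hm', qsigma_neg_left hQ0, qsigma_neg_right hQ0, sub_self]
        rw [← antidiag, hNR m hm, qsigma_neg_right hQ0]
        field_simp
        ring
    · have := hα.ip_add_mul_apply m n
      simp only [hmn, and_false, if_false, mul_zero, zero_add]
      field_simp [ip_ne_zero hγ hmn]
      linear_combination this
  rw [alpha1_eq_lift₂, alpha2_eq_lift₂, br_eq_lift₂]
  exact LinearMap.congr_fun₂ key x y

end IsCocycle

lemma eq_zero_of_alpha_eq_coboundary {z : ℕ} {k : Fin d → ℕ} (hQ0 : ∀ i j, Q i j ≠ 0)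
    (hRNF : IsRNF d Q z k) (hd : 0 < d) (hγ : Generic d γ) {c₁ c₂ : ℂ} {f : g d →ₗ[ℂ] ℂ}
    (h : ∀ x y : g d,
      c₁ * alpha1 d Q γ k hd x y + c₂ * alpha2 d Q γ k hd x y = f (br d Q γ x y)) :
    c₁ = 0 ∧ c₂ = 0 := by
  have hσ := hRNF.qsigma_eq_one_of_mem
  have he := hRNF.k1e1_mem_Rset hd
  have he₂ : k1e1 d k hd + k1e1 d k hd ∈ Rset d Q := (radical hQ0).add_mem he he
  have hE := ip_ne_zero hγ (hRNF.k1e1_ne_zero hd)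
  obtain ⟨r, hr⟩ := hRNF.exists_notMem_Rset
  have hr' : -r ∉ Rset d Q := ((radical hQ0).neg_mem_iff).not.mpr hr
  have h₁ := h (L d (k1e1 d k hd)) (L d (-k1e1 d k hd))
  have h₂ := h (L d (k1e1 d k hd + k1e1 d k hd)) (L d (-(k1e1 d k hd + k1e1 d k hd)))
  have h₃ := h (L d r) (L d (-r))
  simp only [alpha1_L_L, alpha2_L_L, br_L_L, add_neg_cancel, and_true, he, he₂, hr,
    not_true_eq_false, not_false_eq_true, if_true, if_false, mul_zero, add_zero, zero_add,
    sc_of_mem_of_mem γ hσ he ((radical hQ0).neg_mem he),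
    sc_of_mem_of_mem γ hσ he₂ ((radical hQ0).neg_mem he₂),
    sc_of_notMem_of_notMem γ hr hr', qsigma_neg_left hQ0, qsigma_neg_right hQ0, sub_self,
    zero_smul, map_zero, map_smul, smul_eq_mul, ip_neg, ip_add, div_self hE,
    add_div] at h₁ h₂ h₃
  refine ⟨by linear_combination 2 * h₂ - 4 * h₁, ?_⟩
  have := qsigma_ne_zero hQ0 r r
  have := ip_ne_zero_of_notMem hγ hr
  field_simp at h₃
  simpa [this] using h₃

end Cocycles

end QTorus

theorem stmt19_general (d : ℕ) (hd : 0 < d)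
    (Q : Matrix (Fin d) (Fin d) ℂ) (hQ : QOk d Q)
    (z : ℕ) (k : Fin d → ℕ) (hRNF : IsRNF d Q z k)
    (γ : Fin d → ℂ) (hγ : Generic d γ) :
    (∀ α : g d →ₗ[ℂ] g d →ₗ[ℂ] ℂ, IsCocycle d Q γ α →
      ∃ (c₁ c₂ : ℂ) (f : g d →ₗ[ℂ] ℂ),
        ∀ x y : g d,
          α x y = c₁ * alpha1 d Q γ k hd x y + c₂ * alpha2 d Q γ k hd x y +
            f (br d Q γ x y)) ∧
    (∀ c₁ c₂ : ℂ,
      (∃ f : g d →ₗ[ℂ] ℂ, ∀ x y : g d,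
        c₁ * alpha1 d Q γ k hd x y + c₂ * alpha2 d Q γ k hd x y =
          f (br d Q γ x y)) →
      c₁ = 0 ∧ c₂ = 0) :=
  ⟨fun _ hα => hα.exists_eq_alpha_add_coboundary hQ.2.2 hRNF hd hγ,
    fun _ _ ⟨_, hf⟩ => eq_zero_of_alpha_eq_coboundary hQ.2.2 hRNF hd hγ hf⟩

/-- for Q in rational normal form and γ generic, every 2-cocycle α on
g(γ,Q) is cohomologous to a ℂ-linear combination of α₁ and α₂; moreover no nonzero
linear combination of α₁ and α₂ is a coboundary, so the universal central extension
of g has a two-dimensional center. -/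
theorem stmt19 (d : ℕ) (hd1 : 1 < d) (hd : 0 < d)
    (Q : Matrix (Fin d) (Fin d) ℂ) (hQ : QOk d Q)
    (z : ℕ) (k : Fin d → ℕ) (hRNF : IsRNF d Q z k)
    (γ : Fin d → ℂ) (hγ : Generic d γ) :
    (∀ α : g d →ₗ[ℂ] g d →ₗ[ℂ] ℂ, IsCocycle d Q γ α →
      ∃ (c₁ c₂ : ℂ) (f : g d →ₗ[ℂ] ℂ),
        ∀ x y : g d,
          α x y = c₁ * alpha1 d Q γ k hd x y + c₂ * alpha2 d Q γ k hd x y +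
            f (br d Q γ x y)) ∧
    (∀ c₁ c₂ : ℂ,
      (∃ f : g d →ₗ[ℂ] ℂ, ∀ x y : g d,
        c₁ * alpha1 d Q γ k hd x y + c₂ * alpha2 d Q γ k hd x y =
          f (br d Q γ x y)) →
      c₁ = 0 ∧ c₂ = 0) :=
  stmt19_general d hd Q hQ z k hRNF γ hγ
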